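/- arXiv:1407.8498 — 6 statements merged into one kernel-verified Lean document; each statement's English description precedes it below -/
import Mathlib

section
/- Let q = 2^h (h ≥ 1) and F = GF(q²). Let a,b,c,d,e,f ∈ F with c = 0 and (a,b) ≠ (0,0) (so that 𝒬 is a quadratic cone). Then the set 𝒞∞ of points of ℙ³(F) lying on ℋ, on 𝒬, and on the plane at infinity J = 0 has cardinality either 1 or q² + 1. -/
/-!
On the plane `J = 0` the two equations become `X^(q+1) = Y^(q+1)` and `a X² + b Y² = 0`. In
characteristic `2` every element is a square, and with `a = α²`, `b = β²` the second equation is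
`(α X + β Y)² = 0`, i.e. `α X = β Y`. If `α^(q+1) = β^(q+1)` (which forces `α, β ≠ 0`), the first
equation follows from the second and `𝒞∞` is the line `J = α X + β Y = 0`, with `q² + 1` points;
otherwise `X = Y = 0` and `𝒞∞ = {(0 : 0 : 0 : 1)}`. In both cases `𝒞∞` is the projectivized kernel
of a surjective linear map, whose points are counted from its dimension.
-/

open Projectivization Module
open scoped LinearAlgebra.Projectivization

namespace Projectivization

variable {K V : Type*} [Field K] [AddCommGroup V] [Module K V]

theorem ncard_setOf_rep_mem (W : Submodule K V) :
    {p : ℙ K V | p.rep ∈ W}.ncard = Nat.card (ℙ K W) := by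
  have hrange : Set.range (map W.subtype W.injective_subtype) = {p : ℙ K V | p.rep ∈ W} := by
    ext p
    constructor
    · rintro ⟨w, rfl⟩
      induction w using Projectivization.ind with
      | h w hw =>
        obtain ⟨a, ha⟩ := exists_smul_eq_mk_rep K (W.subtype w) (by simpa using hw)
        rw [Set.mem_ofPred_eq, map_mk, ← ha, Units.smul_def]
        exact W.smul_mem _ w.2
    · intro hp
      refine ⟨mk K ⟨p.rep, hp⟩ fun h => p.rep_nonzero (congrArg Subtype.val h), ?_⟩
      rw [map_mk]
      exact p.mk_rep
  rw [← hrange, Set.ncard_range_of_injective (map_injective _ _)]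

theorem ncard_setOf_rep_mem_ker [Finite K] [FiniteDimensional K V] {U : Type*} [AddCommGroup U]
    [Module K U] {φ : V →ₗ[K] U} (hφ : Function.Surjective φ) :
    {p : ℙ K V | φ p.rep = 0}.ncard =
      ∑ i ∈ Finset.range (finrank K V - finrank K U), Nat.card K ^ i := by
  have hker : finrank K (LinearMap.ker φ) = finrank K V - finrank K U := by
    have := φ.finrank_range_add_finrank_ker
    rw [LinearMap.range_eq_top.mpr hφ, finrank_top] at this
    omega
  exact (ncard_setOf_rep_mem (LinearMap.ker φ)).trans (card_of_finrank K _ hker)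

end Projectivization

theorem FiniteField.charP_two_of_card_eq_two_pow {F : Type*} [Field F] [Fintype F] {n : ℕ}
    (h : Fintype.card F = 2 ^ n) : CharP F 2 := by
  have h2n : (2 : F) ^ n = 0 := by exact_mod_cast h ▸ FiniteField.cast_card_eq_zero F
  exact CharTwo.of_one_ne_zero_of_two_eq_zero one_ne_zero (eq_zero_of_pow_eq_zero h2n)

theorem hermitian_cone_at_infinity_iff {F : Type*} [Field F] [CharP F 2] {q : ℕ} (hq : q ≠ 0)
    (α β d e f : F) (v : Fin 4 → F) :
    (v 1 ^ (q + 1) + v 2 ^ (q + 1) + v 3 ^ q * v 0 + v 3 * v 0 ^ q = 0 ∧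
      α * α * v 1 ^ 2 + β * β * v 2 ^ 2 + 0 * v 1 * v 2 + d * v 1 * v 0 + e * v 2 * v 0
        + f * v 0 ^ 2 + v 0 * v 3 = 0 ∧ v 0 = 0) ↔
    v 0 = 0 ∧ v 1 ^ (q + 1) = v 2 ^ (q + 1) ∧ α * v 1 = β * v 2 := by
  rcases eq_or_ne (v 0) 0 with h0 | h0
  · simp only [h0, zero_pow hq, zero_pow two_ne_zero, mul_zero, zero_mul, add_zero, and_true,
      true_and, CharTwo.add_eq_zero]
    rw [← CharTwo.sq_inj (x := α * v 1), mul_pow, mul_pow, sq α, sq β]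
  · simp [h0]

theorem pow_eq_pow_of_mul_eq_mul {M : Type*} [CommMonoidWithZero M] [IsCancelMulZero M]
    {α β x y : M} {n : ℕ} (hαβ : α ^ n = β ^ n) (hα : α ≠ 0) (h : α * x = β * y) :
    x ^ n = y ^ n := by
  have := congrArg (· ^ n) h
  simp only [mul_pow, hαβ] at this
  exact mul_left_cancel₀ (hαβ ▸ pow_ne_zero n hα) this

theorem eq_zero_of_mul_eq_mul_of_pow_eq_pow {M : Type*} [CommMonoidWithZero M]
    [IsCancelMulZero M] {α β x y : M} {n : ℕ} (hαβ : α ^ n ≠ β ^ n) (hxy : x ^ n = y ^ n)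
    (h : α * x = β * y) :
    x = 0 ∧ y = 0 := by
  have hn : n ≠ 0 := by
    rintro rfl
    simp at hαβ
  have hx : x = 0 := by
    by_contra hx
    apply hαβ
    apply mul_right_cancel₀ (pow_ne_zero n hx)
    rw [← mul_pow, h, mul_pow, hxy]
  subst hx
  exact ⟨rfl, (pow_eq_zero_iff hn).mp (hxy.symm.trans (zero_pow hn))⟩

section LinesAtInfinity

variable {F : Type*} [Field F]

theorem surjective_proj_prod_sub {α : F} (hα : α ≠ 0) (β : F) :
    Function.Surjective ((LinearMap.proj 0).prod (α • LinearMap.proj 1 - β • LinearMap.proj 2) :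
      (Fin 4 → F) →ₗ[F] F × F) := by
  rintro ⟨s, t⟩
  refine ⟨![s, t / α, 0, 0], ?_⟩
  simp [mul_div_cancel₀ t hα]

theorem surjective_proj_prod_proj_prod_proj :
    Function.Surjective ((LinearMap.proj 0).prod ((LinearMap.proj 1).prod (LinearMap.proj 2)) :
      (Fin 4 → F) →ₗ[F] F × F × F) := by
  rintro ⟨s, t, u⟩
  exact ⟨![s, t, u, 0], rfl⟩

end LinesAtInfinity

theorem stmt_3_general
    (h q : ℕ) (hq : q = 2 ^ h)
    (F : Type) [Field F] [Fintype F] (hF : Fintype.card F = q ^ 2)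
    (a b c d e f : F) (hc : c = 0) (hab : ¬(a = 0 ∧ b = 0)) :
    Set.ncard {p : Projectivization F (Fin 4 → F) |
        (p.rep 1) ^ (q + 1) + (p.rep 2) ^ (q + 1)
            + (p.rep 3) ^ q * p.rep 0 + p.rep 3 * (p.rep 0) ^ q = 0 ∧
        a * (p.rep 1) ^ 2 + b * (p.rep 2) ^ 2 + c * p.rep 1 * p.rep 2
            + d * p.rep 1 * p.rep 0 + e * p.rep 2 * p.rep 0
            + f * (p.rep 0) ^ 2 + p.rep 0 * p.rep 3 = 0 ∧
        p.rep 0 = 0} ∈ ({1, q ^ 2 + 1} : Set ℕ) := by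
  subst hc
  have hq0 : q ≠ 0 := hq ▸ pow_ne_zero h two_ne_zero
  have : CharP F 2 :=
    FiniteField.charP_two_of_card_eq_two_pow (n := 2 * h) (by rw [hF, hq, ← pow_mul, mul_comm])
  obtain ⟨α, rfl⟩ := isSquare_of_charTwo' a
  obtain ⟨β, rfl⟩ := isSquare_of_charTwo' b
  have key := hermitian_cone_at_infinity_iff hq0 α β d e f
  by_cases hαβ : α ^ (q + 1) = β ^ (q + 1)
  · have hα : α ≠ 0 := by
      rintro rfl
      exact hab ⟨zero_mul 0, by simpa [hq0] using hαβ.symm⟩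
    let φ : (Fin 4 → F) →ₗ[F] F × F :=
      (LinearMap.proj 0).prod (α • LinearMap.proj 1 - β • LinearMap.proj 2)
    have hφ (v : Fin 4 → F) :
        (v 0 = 0 ∧ v 1 ^ (q + 1) = v 2 ^ (q + 1) ∧ α * v 1 = β * v 2) ↔ φ v = 0 := by
      change _ ↔ (v 0, α * v 1 - β * v 2) = 0
      rw [Prod.mk_eq_zero, sub_eq_zero]
      exact and_congr_right fun _ => and_iff_right_of_imp (pow_eq_pow_of_mul_eq_mul hαβ hα)
    rw [Set.ext fun p : ℙ F (Fin 4 → F) => (key p.rep).trans (hφ p.rep),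
      ncard_setOf_rep_mem_ker (surjective_proj_prod_sub hα β)]
    simp [Finset.sum_range_succ, hF, add_comm]
  · let φ : (Fin 4 → F) →ₗ[F] F × F × F :=
      (LinearMap.proj 0).prod ((LinearMap.proj 1).prod (LinearMap.proj 2))
    have hφ (v : Fin 4 → F) :
        (v 0 = 0 ∧ v 1 ^ (q + 1) = v 2 ^ (q + 1) ∧ α * v 1 = β * v 2) ↔ φ v = 0 := by
      change _ ↔ (v 0, v 1, v 2) = 0
      simp only [Prod.mk_eq_zero]
      refine and_congr_right fun _ => ⟨fun ⟨hpow, hlin⟩ =>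
        eq_zero_of_mul_eq_mul_of_pow_eq_pow hαβ hpow hlin, ?_⟩
      rintro ⟨h1, h2⟩
      simp [h1, h2]
    rw [Set.ext fun p : ℙ F (Fin 4 → F) => (key p.rep).trans (hφ p.rep),
      ncard_setOf_rep_mem_ker surjective_proj_prod_proj_prod_proj]
    simp

/-- Lemma 3.1 of the paper (cone case): if `𝒬` is a quadratic cone
(`c = 0`, `(a,b) ≠ (0,0)`), then `𝒞∞ = ℋ ∩ 𝒬 ∩ Σ∞` consists of
either `1` point or `q² + 1` points. -/
theorem stmt_3
    (h q : ℕ) (hh : 1 ≤ h) (hq : q = 2 ^ h)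
    (F : Type) [Field F] [Fintype F] (hF : Fintype.card F = q ^ 2)
    (a b c d e f : F) (hc : c = 0) (hab : ¬(a = 0 ∧ b = 0)) :
    Set.ncard {p : Projectivization F (Fin 4 → F) |
        (p.rep 1) ^ (q + 1) + (p.rep 2) ^ (q + 1)
            + (p.rep 3) ^ q * p.rep 0 + p.rep 3 * (p.rep 0) ^ q = 0 ∧
        a * (p.rep 1) ^ 2 + b * (p.rep 2) ^ 2 + c * p.rep 1 * p.rep 2
            + d * p.rep 1 * p.rep 0 + e * p.rep 2 * p.rep 0
            + f * (p.rep 0) ^ 2 + p.rep 0 * p.rep 3 = 0 ∧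
        p.rep 0 = 0} ∈ ({1, q ^ 2 + 1} : Set ℕ) :=
  stmt_3_general h q hq F hF a b c d e f hc hab
end

section
/- Let q = 2^h (h ≥ 1) and F = GF(q²). Let a,b,c,d,e,f ∈ F with c ≠ 0 and Tr(ab/c²) = 0 (so that 𝒬 is a hyperbolic quadric). Then the set 𝒞∞ of points of ℙ³(F) lying on ℋ, on 𝒬, and on the plane at infinity J = 0 has cardinality 1, q² + 1, or 2q² + 1. -/
/-!
At infinity (`J = 0`) the Hermitian equation becomes `X^{q+1} + Y^{q+1} = 0` and the quadric equation
the binary form `aX² + cXY + bY²`. A point with `Y = 0` must then have `X = 0`, so it is the single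
point `(0 : 0 : 0 : 1)`; every other point is `(0 : t : 1 : z)` with `z` arbitrary and `t` a root of
`at² + ct + b`, which has at most two roots since `c ≠ 0`. Hence `|𝒞∞| = 1 + k q²` with `k ≤ 2`.
-/

open Projectivization
open scoped LinearAlgebra.Projectivization

theorem Projectivization.rep_mk_iff {K V : Type*} [DivisionRing K] [AddCommGroup V] [Module K V]
    {P : V → Prop} (hP : ∀ (u : K) (v : V), u ≠ 0 → (P (u • v) ↔ P v)) {v : V} (hv : v ≠ 0) :
    P (mk K v hv).rep ↔ P v := by
  obtain ⟨u, hu⟩ := exists_smul_eq_mk_rep K v hv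
  rw [← hu, Units.smul_def]
  exact hP _ _ u.ne_zero

open Polynomial in
theorem Set.ncard_setOf_quadratic_eq_zero_le_two {F : Type*} [Field F] {a b c : F} (hc : c ≠ 0) :
    {t : F | a * t ^ 2 + c * t + b = 0}.ncard ≤ 2 := by
  classical
  set P : F[X] := C a * X ^ 2 + C c * X + C b
  have hP : P ≠ 0 := fun h0 ↦ hc (by simpa [P, coeff_X_pow] using congrArg (coeff · 1) h0)
  have hroots : {t : F | a * t ^ 2 + c * t + b = 0} = P.roots.toFinset := by
    ext t
    simp [P, mem_roots hP]
  calc {t : F | a * t ^ 2 + c * t + b = 0}.ncard = P.roots.toFinset.card := by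
        rw [hroots, Set.ncard_coe_finset]
    _ ≤ Multiset.card P.roots := Multiset.toFinset_card_le _
    _ ≤ P.natDegree := card_roots' P
    _ ≤ 2 := by simp only [P]; compute_degree

section CurveAtInfinity

variable {F : Type*} [Field F]

/-- `v = (J, X, Y, Z)` lies on `ℋ ∩ 𝒬 ∩ Σ∞`, with `J = 0` already substituted in both equations. -/
def OnCurveAtInfinity (q : ℕ) (a b c : F) (v : Fin 4 → F) : Prop :=
  v 0 = 0 ∧ v 1 ^ (q + 1) + v 2 ^ (q + 1) = 0 ∧ a * v 1 ^ 2 + b * v 2 ^ 2 + c * v 1 * v 2 = 0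

theorem onCurveAtInfinity_smul_iff {q : ℕ} {a b c u : F} (hu : u ≠ 0) (v : Fin 4 → F) :
    OnCurveAtInfinity q a b c (u • v) ↔ OnCurveAtInfinity q a b c v := by
  have hherm : (u • v) 1 ^ (q + 1) + (u • v) 2 ^ (q + 1)
      = u ^ (q + 1) * (v 1 ^ (q + 1) + v 2 ^ (q + 1)) := by
    simp only [Pi.smul_apply, smul_eq_mul]; ring
  have hquad : a * (u • v) 1 ^ 2 + b * (u • v) 2 ^ 2 + c * (u • v) 1 * (u • v) 2
      = u ^ 2 * (a * v 1 ^ 2 + b * v 2 ^ 2 + c * v 1 * v 2) := by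
    simp only [Pi.smul_apply, smul_eq_mul]; ring
  unfold OnCurveAtInfinity
  rw [hherm, hquad, Pi.smul_apply, smul_eq_mul]
  simp [hu]

theorem onCurveAtInfinity_iff {q : ℕ} (hq : q ≠ 0) (a b c d e f : F) (v : Fin 4 → F) :
    (v 1 ^ (q + 1) + v 2 ^ (q + 1) + v 3 ^ q * v 0 + v 3 * v 0 ^ q = 0 ∧
        a * v 1 ^ 2 + b * v 2 ^ 2 + c * v 1 * v 2 + d * v 1 * v 0 + e * v 2 * v 0
            + f * v 0 ^ 2 + v 0 * v 3 = 0 ∧ v 0 = 0) ↔ OnCurveAtInfinity q a b c v := by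
  unfold OnCurveAtInfinity
  constructor
  · rintro ⟨hherm, hquad, hJ⟩
    simp_all [zero_pow hq]
  · rintro ⟨hJ, hherm, hquad⟩
    simp_all [zero_pow hq]

/-- The affine chart `Y = 1` of the plane at infinity. -/
def affinePointAtInfinity (t z : F) : ℙ F (Fin 4 → F) :=
  mk F ![0, t, 1, z] (fun h ↦ by simpa using congrFun h 2)

def pointZ : ℙ F (Fin 4 → F) :=
  mk F ![0, 0, 0, 1] (fun h ↦ by simpa using congrFun h 3)

theorem affinePointAtInfinity_injective :
    Function.Injective (fun tz : F × F ↦ affinePointAtInfinity tz.1 tz.2) := by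
  rintro ⟨t, z⟩ ⟨t', z'⟩ h
  obtain ⟨s, hs⟩ := (mk_eq_mk_iff' F _ _ _ _).1 h
  have hs1 : s = 1 := by simpa using congrFun hs 2
  subst hs1
  have ht : t' = t := by simpa using congrFun hs 1
  have hz : z' = z := by simpa using congrFun hs 3
  rw [ht, hz]

theorem affinePointAtInfinity_ne_pointZ (t z : F) : affinePointAtInfinity t z ≠ pointZ := by
  intro h
  obtain ⟨s, hs⟩ := (mk_eq_mk_iff' F _ _ _ _).1 h
  simpa using congrFun hs 2

theorem mk_mem_setOf_onCurveAtInfinity_iff {q : ℕ} {a b c : F} {v : Fin 4 → F} (hv : v ≠ 0) :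
    mk F v hv ∈ {p : ℙ F (Fin 4 → F) | OnCurveAtInfinity q a b c p.rep}
      ↔ OnCurveAtInfinity q a b c v :=
  rep_mk_iff (fun _ w hu ↦ onCurveAtInfinity_smul_iff hu w) hv

theorem setOf_onCurveAtInfinity_eq {q : ℕ} {a b c : F} :
    {p : ℙ F (Fin 4 → F) | OnCurveAtInfinity q a b c p.rep}
      = insert pointZ ((fun tz : F × F ↦ affinePointAtInfinity tz.1 tz.2) ''
          ({t | t ^ (q + 1) + 1 = 0 ∧ a * t ^ 2 + c * t + b = 0} ×ˢ Set.univ)) := by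
  refine Set.Subset.antisymm (fun p ↦ ?_) ?_
  · induction p using Projectivization.ind with | h v hv => ?_
    rw [mk_mem_setOf_onCurveAtInfinity_iff]
    rintro ⟨hJ, hherm, hquad⟩
    by_cases hY : v 2 = 0
    · have hX : v 1 = 0 := by simpa [hY] using hherm
      refine Or.inl ((mk_eq_mk_iff' F _ _ _ _).2 ⟨v 3, ?_⟩)
      ext i; fin_cases i <;> simp [hJ, hX, hY]
    · refine Or.inr ⟨(v 1 / v 2, v 3 / v 2), ⟨⟨?_, ?_⟩, trivial⟩,
        (mk_eq_mk_iff' F _ _ _ _).2 ⟨(v 2)⁻¹, ?_⟩⟩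
      · rw [div_pow, div_add_one (pow_ne_zero _ hY), hherm, zero_div]
      · field_simp
        linear_combination hquad
      · ext i; fin_cases i <;> simp [hJ, hY, div_eq_inv_mul]
  · rintro _ (rfl | ⟨⟨t, z⟩, ⟨⟨hherm, hquad⟩, -⟩, rfl⟩)
    · rw [pointZ, mk_mem_setOf_onCurveAtInfinity_iff]
      simp [OnCurveAtInfinity]
    · dsimp only [affinePointAtInfinity]
      rw [mk_mem_setOf_onCurveAtInfinity_iff]
      refine ⟨rfl, by simpa using hherm, by simp; linear_combination hquad⟩

theorem ncard_setOf_onCurveAtInfinity [Finite F] (q : ℕ) (a b c : F) :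
    {p : ℙ F (Fin 4 → F) | OnCurveAtInfinity q a b c p.rep}.ncard
      = {t : F | t ^ (q + 1) + 1 = 0 ∧ a * t ^ 2 + c * t + b = 0}.ncard * Nat.card F + 1 := by
  rw [setOf_onCurveAtInfinity_eq, Set.ncard_insert_of_notMem,
    Set.ncard_image_of_injective _ affinePointAtInfinity_injective, Set.ncard_prod,
    Set.ncard_univ]
  rintro ⟨⟨t, z⟩, -, h⟩
  exact affinePointAtInfinity_ne_pointZ t z h

end CurveAtInfinity

theorem stmt_4_general
    (q : ℕ)
    (F : Type) [Field F] [Fintype F] (hF : Fintype.card F = q ^ 2)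
    (a b c d e f : F) (hc : c ≠ 0) :
    Set.ncard {p : Projectivization F (Fin 4 → F) |
        (p.rep 1) ^ (q + 1) + (p.rep 2) ^ (q + 1)
            + (p.rep 3) ^ q * p.rep 0 + p.rep 3 * (p.rep 0) ^ q = 0 ∧
        a * (p.rep 1) ^ 2 + b * (p.rep 2) ^ 2 + c * p.rep 1 * p.rep 2
            + d * p.rep 1 * p.rep 0 + e * p.rep 2 * p.rep 0
            + f * (p.rep 0) ^ 2 + p.rep 0 * p.rep 3 = 0 ∧
        p.rep 0 = 0} ∈ ({1, q ^ 2 + 1, 2 * q ^ 2 + 1} : Set ℕ) := by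
  have hq : q ≠ 0 := by
    rintro rfl
    simp at hF
  have hroots : {t : F | t ^ (q + 1) + 1 = 0 ∧ a * t ^ 2 + c * t + b = 0}.ncard ≤ 2 :=
    (Set.ncard_le_ncard fun _ ht ↦ ht.2).trans (Set.ncard_setOf_quadratic_eq_zero_le_two hc)
  simp_rw [onCurveAtInfinity_iff hq]
  rw [ncard_setOf_onCurveAtInfinity, Nat.card_eq_fintype_card, hF]
  interval_cases {t : F | t ^ (q + 1) + 1 = 0 ∧ a * t ^ 2 + c * t + b = 0}.ncard <;> simp

/-- Lemma 3.1 of the paper (hyperbolic case): if `𝒬` is a hyperbolic quadric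
(`c ≠ 0`, `Tr(ab/c²) = 0`), then `𝒞∞ = ℋ ∩ 𝒬 ∩ Σ∞` consists of
`1`, `q² + 1` or `2q² + 1` points. -/
theorem stmt_4
    (h q : ℕ) (hh : 1 ≤ h) (hq : q = 2 ^ h)
    (F : Type) [Field F] [Fintype F] (hF : Fintype.card F = q ^ 2)
    (a b c d e f : F) (hc : c ≠ 0)
    (htr : ∑ i ∈ Finset.range (2 * h), (a * b / c ^ 2) ^ 2 ^ i = 0) :
    Set.ncard {p : Projectivization F (Fin 4 → F) |
        (p.rep 1) ^ (q + 1) + (p.rep 2) ^ (q + 1)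
            + (p.rep 3) ^ q * p.rep 0 + p.rep 3 * (p.rep 0) ^ q = 0 ∧
        a * (p.rep 1) ^ 2 + b * (p.rep 2) ^ 2 + c * p.rep 1 * p.rep 2
            + d * p.rep 1 * p.rep 0 + e * p.rep 2 * p.rep 0
            + f * (p.rep 0) ^ 2 + p.rep 0 * p.rep 3 = 0 ∧
        p.rep 0 = 0} ∈ ({1, q ^ 2 + 1, 2 * q ^ 2 + 1} : Set ℕ) :=
  stmt_4_general q F hF a b c d e f hc
end

section
/- Let q = 2^h (h ≥ 1) and F = GF(q²). Let a,b,c,d,e,f ∈ F with c = 0 and (a,b) ≠ (0,0) (cone case). Then the number of triples (x,y,z) ∈ F³ satisfying both z^q + z = x^{q+1} + y^{q+1} and z = ax² + by² + cxy + dx + ey + f belongs to the set {q³ − q² + q, q³ − q, q³ + q, q³ + q² − q}. -/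
/-!
Write `σ x = x ^ q`, an involution of `F` whose fixed field `K` has `q` elements; then
`x ^ (q + 1) = σ x * x` is the norm and `z ^ q + z` the trace to `K`. Eliminating `z` through the
quadric and translating `x` by `σ d` and `y` by `σ e` turns the count into the number of solutions
of `Q_a x + Q_b y = c` with `c ∈ K`, where `Q_a x = σ x * x + Tr (a * x ^ 2)` (`quadForm`) is a
`K`-valued quadratic form on the `K`-plane `F` with polar form `Tr (σ x * y)` (`polar`).

`Q_a` is nondegenerate. Scaling by `u ∈ K` multiplies it by `u ^ 2`, and in characteristic 2 every
element of `K` is a square, so all fibres over `K \ {0}` have the same size `B`, and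
`Z + (q - 1) * B = q ^ 2` for the size `Z` of the zero fibre. Either `Q_a` is anisotropic
(`Z = 1`, `B = q + 1`), or it has a hyperbolic pair and its zeros are two `K`-lines
(`Z = 2 * q - 1`, `B = q - 1`). Summing the fibres of `Q_b` over the values of `c + Q_a x` gives
the four possible counts.
-/

open Finset

namespace HermitianSurface

variable {F : Type*} [Field F] (σ : F →+* F)

def quadForm (a x : F) : F := σ x * x + σ (a * x ^ 2) + a * x ^ 2

def polar (x y : F) : F := σ x * y + x * σ y

variable {σ}

lemma polar_comm (x y : F) : polar σ x y = polar σ y x := by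
  unfold polar; ring

lemma apply_polar (hσ : Function.Involutive σ) (x y : F) : σ (polar σ x y) = polar σ x y := by
  simp only [polar, map_add, map_mul, hσ _]; ring

lemma apply_quadForm (hσ : Function.Involutive σ) (a x : F) :
    σ (quadForm σ a x) = quadForm σ a x := by
  simp only [quadForm, map_add, map_mul, map_pow, hσ _]; ring

lemma polar_smul_left {u : F} (hu : σ u = u) (x y : F) :
    polar σ (u * x) y = u * polar σ x y := by
  simp only [polar, map_mul, hu]; ring

lemma polar_smul_right {u : F} (hu : σ u = u) (x y : F) :
    polar σ x (u * y) = u * polar σ x y := by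
  simp only [polar, map_mul, hu]; ring

lemma polar_zero_left (y : F) : polar σ 0 y = 0 := by
  simp [polar]

lemma quadForm_smul {u : F} (hu : σ u = u) (a x : F) :
    quadForm σ a (u * x) = u ^ 2 * quadForm σ a x := by
  simp only [quadForm, map_mul, map_pow, hu]; ring

lemma polar_add_right (x y z : F) : polar σ x (y + z) = polar σ x y + polar σ x z := by
  simp only [polar, map_add]; ring

section CharTwo

variable [CharP F 2]

lemma polar_self (x : F) : polar σ x x = 0 := by
  unfold polar; grind

lemma quadForm_add (a x y : F) :
    quadForm σ a (x + y) = quadForm σ a x + quadForm σ a y + polar σ x y := by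
  simp only [quadForm, polar, map_add, map_mul, map_pow]; grind

lemma trace_add_norm_eq (hσ : Function.Involutive σ) (a b d e f x y : F) :
    σ (a * x ^ 2 + b * y ^ 2 + d * x + e * y + f) + (a * x ^ 2 + b * y ^ 2 + d * x + e * y + f) +
        (σ x * x + σ y * y) =
      quadForm σ a (x + σ d) + quadForm σ b (y + σ e) +
        (σ f + f + quadForm σ a (σ d) + quadForm σ b (σ e)) := by
  simp only [quadForm, map_add, map_mul, map_pow, hσ _]
  grind

lemma polar_eq_zero_iff {x : F} (hx : x ≠ 0) (y : F) :
    polar σ x y = 0 ↔ ∃ u, σ u = u ∧ y = u * x := by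
  constructor
  · intro h
    refine ⟨y / x, ?_, (div_mul_cancel₀ y hx).symm⟩
    have hσx : σ x ≠ 0 := (map_ne_zero σ).mpr hx
    rw [map_div₀, div_eq_div_iff hσx hx]
    unfold polar at h; grind
  · rintro ⟨u, hu, rfl⟩
    rw [polar_smul_right hu, polar_self, mul_zero]

lemma quadForm_hyperbolic {a x y u v : F} (hx : quadForm σ a x = 0) (hy : quadForm σ a y = 0)
    (hxy : polar σ x y = 1) (hu : σ u = u) (hv : σ v = v) :
    quadForm σ a (u * x + v * y) = u * v := by
  rw [quadForm_add, quadForm_smul hu, quadForm_smul hv, polar_smul_left hu, polar_smul_right hv,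
    hx, hy, hxy]
  ring

lemma eq_polar_mul_add_polar_mul (hσ : Function.Involutive σ) {x y : F} (hxy : polar σ x y = 1)
    (z : F) : z = polar σ z y * x + polar σ x z * y := by
  have hx : x ≠ 0 := by rintro rfl; simp [polar_zero_left] at hxy
  set w := z + polar σ z y * x + polar σ x z * y
  have hxw : polar σ x w = 0 := by
    simp only [w, polar_add_right, polar_smul_right (apply_polar hσ _ _), polar_self, hxy]
    grind
  obtain ⟨t, ht, hw⟩ := (polar_eq_zero_iff hx w).mp hxw
  have hwy : polar σ w y = 0 := by
    rw [polar_comm]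
    simp only [w, polar_add_right, polar_smul_right (apply_polar hσ _ _), polar_self,
      polar_comm y x, hxy, polar_comm y z]
    grind
  rw [hw, polar_smul_left ht, hxy, mul_one] at hwy
  rw [hwy, zero_mul] at hw
  grind

lemma quadForm_eq_zero_iff_of_hyperbolic (hσ : Function.Involutive σ) {a x y : F}
    (hx : quadForm σ a x = 0) (hy : quadForm σ a y = 0) (hxy : polar σ x y = 1) (z : F) :
    quadForm σ a z = 0 ↔ polar σ z y = 0 ∨ polar σ x z = 0 := by
  have key := quadForm_hyperbolic hx hy hxy (apply_polar hσ z y) (apply_polar hσ x z)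
  rw [← eq_polar_mul_add_polar_mul hσ hxy z] at key
  rw [key, mul_eq_zero]

lemma exists_polar_eq_one (hσ : Function.Involutive σ) {θ : F} (hθ : σ θ ≠ θ) {x : F}
    (hx : x ≠ 0) : ∃ y, polar σ x y = 1 := by
  have hσx : σ x ≠ 0 := (map_ne_zero σ).mpr hx
  have hT : θ + σ θ ≠ 0 := fun h => hθ (by grind)
  -- `polar σ x (θ / σ x) = θ + σ θ`, which is nonzero; normalise it to `1`.
  refine ⟨θ / (σ x * (θ + σ θ)), ?_⟩
  simp only [polar, map_div₀, map_mul, map_add, hσ _, add_comm (σ θ) θ]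
  field_simp

lemma exists_isotropic_polar_eq_one (hσ : Function.Involutive σ) {θ : F} (hθ : σ θ ≠ θ)
    {a x : F} (hx : x ≠ 0) (hQx : quadForm σ a x = 0) :
    ∃ y, quadForm σ a y = 0 ∧ polar σ x y = 1 := by
  obtain ⟨y, hxy⟩ := exists_polar_eq_one hσ hθ hx
  refine ⟨quadForm σ a y * x + y, ?_, ?_⟩
  · rw [quadForm_add, quadForm_smul (apply_quadForm hσ a y),
      polar_smul_left (apply_quadForm hσ a y), hQx, hxy]
    grind
  · rw [polar_add_right, polar_smul_right (apply_quadForm hσ a y), polar_self, hxy]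
    ring

lemma exists_fixed_sq_eq [Finite F] {w : F} (hw : σ w = w) : ∃ u, σ u = u ∧ u ^ 2 = w := by
  set u := (frobeniusEquiv F 2).symm w
  have hu : u ^ 2 = w := frobeniusEquiv_symm_pow_p F 2 w
  refine ⟨u, frobenius_inj F 2 ?_, hu⟩
  simp only [frobenius_def, ← map_pow, hu, hw]

end CharTwo

section Counting

variable [Fintype F] [DecidableEq F]

variable (σ) in
def fixedPts : Finset F := {x | σ x = x}

@[simp] lemma mem_fixedPts {x : F} : x ∈ fixedPts σ ↔ σ x = x := by
  simp [fixedPts]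

lemma two_le_card_fixedPts : 2 ≤ #(fixedPts σ) := by
  have h01 : {0, 1} ⊆ fixedPts σ := by
    intro x hx; simp only [mem_insert, mem_singleton] at hx; rcases hx with rfl | rfl <;> simp
  simpa using card_le_card h01

lemma card_le_card_fixedPts_sq (hσ : Function.Involutive σ) {θ : F} (hθ : σ θ ≠ θ) :
    Fintype.card F ≤ #(fixedPts σ) ^ 2 := by
  rw [sq, ← card_product, ← card_univ]
  refine card_le_card_of_injOn (fun x => (x + σ x, θ * x + σ (θ * x))) ?_ ?_
  · intro x _; simp [hσ _, add_comm]
  · intro x _ y _ hxy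
    simp only [Prod.mk.injEq, map_mul] at hxy
    have h : (σ θ - θ) * (x - y) = 0 := by linear_combination σ θ * hxy.1 - hxy.2
    simpa [sub_eq_zero, hθ] using h

lemma sum_card_quadForm_fiber (hσ : Function.Involutive σ) (a : F) :
    ∑ s ∈ fixedPts σ, #{x | quadForm σ a x = s} = Fintype.card F := by
  rw [← card_univ, card_eq_sum_card_fiberwise (t := fixedPts σ)]
  intro x _
  simp [apply_quadForm hσ]

lemma exists_apply_ne {k : ℕ} (hk : #(fixedPts σ) = k) (hcard : Fintype.card F = k ^ 2) :
    ∃ θ, σ θ ≠ θ := by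
  by_contra! h
  have : fixedPts σ = univ := eq_univ_of_forall fun x => mem_fixedPts.mpr (h x)
  have h2k : 2 ≤ k := hk ▸ two_le_card_fixedPts
  rw [this, card_univ, hcard] at hk
  nlinarith

variable [CharP F 2]

lemma card_filter_polar_eq_zero {x : F} (hx : x ≠ 0) :
    #{y | polar σ x y = 0} = #(fixedPts σ) := by
  have : ({y | polar σ x y = 0} : Finset F) = (fixedPts σ).image (· * x) := by
    ext y; simp [polar_eq_zero_iff hx, eq_comm]
  rw [this, card_image_of_injective _ (mul_left_injective₀ hx)]

lemma card_quadForm_eq_zero_of_isotropic (hσ : Function.Involutive σ) {θ : F} (hθ : σ θ ≠ θ)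
    {a x : F} (hx : x ≠ 0) (hQx : quadForm σ a x = 0) :
    #{z | quadForm σ a z = 0} = 2 * #(fixedPts σ) - 1 := by
  obtain ⟨y, hQy, hxy⟩ := exists_isotropic_polar_eq_one hσ hθ hx hQx
  have hy : y ≠ 0 := by rintro rfl; simp [polar_comm x, polar_zero_left] at hxy
  set A : Finset F := {z | polar σ y z = 0}
  set B : Finset F := {z | polar σ x z = 0}
  have hunion : ({z | quadForm σ a z = 0} : Finset F) = A ∪ B := by
    ext z; simp [A, B, quadForm_eq_zero_iff_of_hyperbolic hσ hQx hQy hxy, polar_comm z y]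
  have hinter : A ∩ B = {0} := by
    ext z
    simp only [A, B, mem_inter, mem_filter, mem_univ, true_and, mem_singleton]
    constructor
    · rintro ⟨hyz, hxz⟩
      rw [eq_polar_mul_add_polar_mul hσ hxy z, polar_comm, hyz, hxz]; ring
    · rintro rfl; simp [polar_comm _ (0 : F), polar_zero_left]
  have := card_union_add_card_inter A B
  rw [← hunion, hinter, card_singleton, card_filter_polar_eq_zero hy,
    card_filter_polar_eq_zero hx] at this
  omega

lemma card_quadForm_fiber_eq_of_ne_zero {s t : F} (hs : σ s = s) (hs0 : s ≠ 0) (ht : σ t = t)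
    (ht0 : t ≠ 0) (a : F) : #{x | quadForm σ a x = s} = #{x | quadForm σ a x = t} := by
  obtain ⟨u, hu, hu2⟩ := exists_fixed_sq_eq (w := t / s) (by rw [map_div₀, hs, ht])
  have hu0 : u ≠ 0 := by rintro rfl; exact div_ne_zero ht0 hs0 (by simpa using hu2.symm)
  have hu' : σ u⁻¹ = u⁻¹ := by rw [map_inv₀, hu]
  refine card_nbij' (u * ·) (u⁻¹ * ·) ?_ ?_ ?_ ?_
  · intro x hx
    simp only [coe_filter, mem_univ, true_and, Set.mem_ofPred_eq] at hx ⊢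
    rw [quadForm_smul hu, hx, hu2, div_mul_cancel₀ t hs0]
  · intro x hx
    simp only [coe_filter, mem_univ, true_and, Set.mem_ofPred_eq] at hx ⊢
    rw [quadForm_smul hu', hx, inv_pow, hu2, inv_div, div_mul_cancel₀ s ht0]
  · intro x _; simp [hu0]
  · intro x _; simp [hu0]

lemma card_quadForm_eq_zero (hσ : Function.Involutive σ) {θ : F} (hθ : σ θ ≠ θ) (a : F) :
    #{z | quadForm σ a z = 0} = 1 ∨ #{z | quadForm σ a z = 0} = 2 * #(fixedPts σ) - 1 := by
  by_cases hiso : ∃ x, x ≠ 0 ∧ quadForm σ a x = 0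
  · obtain ⟨x, hx, hQx⟩ := hiso
    exact Or.inr (card_quadForm_eq_zero_of_isotropic hσ hθ hx hQx)
  · push Not at hiso
    refine Or.inl (card_eq_one.mpr ⟨0, ?_⟩)
    ext z
    simp only [mem_filter, mem_univ, true_and, mem_singleton]
    refine ⟨fun hz => by_contra fun h => hiso z h hz, ?_⟩
    rintro rfl
    simp [quadForm]

theorem quadForm_fiber_profile (hσ : Function.Involutive σ) {k : ℕ} (hk : #(fixedPts σ) = k)
    (hcard : Fintype.card F = k ^ 2) (a : F) :
    ∃ Z B, (Z = 1 ∧ B = k + 1 ∨ Z = 2 * k - 1 ∧ B = k - 1) ∧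
      ∀ s, σ s = s → #{x | quadForm σ a x = s} = if s = 0 then Z else B := by
  obtain ⟨θ, hθ⟩ := exists_apply_ne hk hcard
  have h2k : 2 ≤ k := hk ▸ two_le_card_fixedPts
  have hfib : ∀ s, σ s = s → s ≠ 0 →
      #{x | quadForm σ a x = s} = #{x | quadForm σ a x = 1} :=
    fun s hs hs0 => card_quadForm_fiber_eq_of_ne_zero hs hs0 (map_one σ) one_ne_zero a
  refine ⟨#{x | quadForm σ a x = 0}, #{x | quadForm σ a x = 1}, ?_, ?_⟩
  · have h0 : (0 : F) ∈ fixedPts σ := by simp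
    have hsum : #{x | quadForm σ a x = 0} + (k - 1) * #{x | quadForm σ a x = 1} = k ^ 2 := by
      rw [← hcard, ← sum_card_quadForm_fiber hσ a, ← add_sum_erase _ _ h0,
        sum_congr rfl fun s hs =>
          hfib s (mem_fixedPts.mp (mem_of_mem_erase hs)) (ne_of_mem_erase hs),
        sum_const, card_erase_of_mem h0, hk, smul_eq_mul]
    rw [← hk] at hsum ⊢
    rcases card_quadForm_eq_zero hσ hθ a with hZ | hZ <;> rw [hZ] at hsum ⊢
    · refine Or.inl ⟨rfl, Nat.eq_of_mul_eq_mul_left (by omega : 0 < #(fixedPts σ) - 1) ?_⟩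
      zify [(by omega : 1 ≤ #(fixedPts σ))] at hsum ⊢
      linear_combination hsum
    · refine Or.inr ⟨rfl, Nat.eq_of_mul_eq_mul_left (by omega : 0 < #(fixedPts σ) - 1) ?_⟩
      zify [(by omega : 1 ≤ #(fixedPts σ)), (by omega : 1 ≤ 2 * #(fixedPts σ))] at hsum ⊢
      linear_combination hsum
  · intro s hs
    split_ifs with hs0
    · rw [hs0]
    · exact hfib s hs hs0

lemma mul_add_sub_mul_mem {k n Z B : ℕ} (hk : 2 ≤ k)
    (hn : n = 1 ∨ n = k + 1 ∨ n = 2 * k - 1 ∨ n = k - 1)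
    (hZB : Z = 1 ∧ B = k + 1 ∨ Z = 2 * k - 1 ∧ B = k - 1) :
    n * Z + (k ^ 2 - n) * B ∈
      ({k ^ 3 - k ^ 2 + k, k ^ 3 - k, k ^ 3 + k, k ^ 3 + k ^ 2 - k} : Set ℕ) := by
  have hk2 : 2 * k ≤ k ^ 2 := by nlinarith
  have hk3 : k ^ 2 ≤ k ^ 3 := Nat.pow_le_pow_right (by omega) (by norm_num)
  have hnk : n ≤ k ^ 2 := by omega
  replace hn : (n : ℤ) = 1 ∨ (n : ℤ) = k + 1 ∨ (n : ℤ) = 2 * k - 1 ∨ (n : ℤ) = k - 1 := by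
    omega
  replace hZB : (Z : ℤ) = 1 ∧ (B : ℤ) = k + 1 ∨ (Z : ℤ) = 2 * k - 1 ∧ (B : ℤ) = k - 1 := by
    omega
  simp only [Set.mem_insert_iff, Set.mem_singleton_iff]
  zify [hnk, hk3, (show k ≤ k ^ 3 by omega), (show k ≤ k ^ 3 + k ^ 2 by omega)]
  rcases hZB with ⟨hZ, hB⟩ | ⟨hZ, hB⟩ <;> rcases hn with hn | hn | hn | hn <;>
    rw [hZ, hB, hn] <;>
    first
    | (left; ring1) | (right; left; ring1) | (right; right; left; ring1)
    | (right; right; right; ring1)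

theorem card_quadForm_add_eq_mem (hσ : Function.Involutive σ) {k : ℕ} (hk : #(fixedPts σ) = k)
    (hcard : Fintype.card F = k ^ 2) {c : F} (hc : σ c = c) (a b : F) :
    #{p : F × F | quadForm σ a p.1 + quadForm σ b p.2 = c} ∈
      ({k ^ 3 - k ^ 2 + k, k ^ 3 - k, k ^ 3 + k, k ^ 3 + k ^ 2 - k} : Set ℕ) := by
  obtain ⟨Za, Ba, hZBa, ha⟩ := quadForm_fiber_profile hσ hk hcard a
  obtain ⟨Zb, Bb, hZBb, hb⟩ := quadForm_fiber_profile hσ hk hcard b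
  have hfib : ∀ x, #{y | quadForm σ a x + quadForm σ b y = c} =
      if quadForm σ a x = c then Zb else Bb := by
    intro x
    have hy : ∀ y, quadForm σ a x + quadForm σ b y = c ↔
        quadForm σ b y = c + quadForm σ a x := fun y => by grind
    simp only [hy]
    rw [hb _ (by rw [map_add, hc, apply_quadForm hσ])]
    exact if_congr (by grind) rfl rfl
  set n := #{x | quadForm σ a x = c}
  have hn : n = 1 ∨ n = k + 1 ∨ n = 2 * k - 1 ∨ n = k - 1 := by
    rw [show n = _ from ha c hc]; split_ifs <;> omega
  have hcompl := card_filter_add_card_filter_not (s := univ) (fun x => quadForm σ a x = c)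
  rw [card_univ, hcard] at hcompl
  have hcount : #{p : F × F | quadForm σ a p.1 + quadForm σ b p.2 = c} =
      n * Zb + (k ^ 2 - n) * Bb := calc
    _ = ∑ x, #{y | quadForm σ a x + quadForm σ b y = c} := by
      rw [card_filter, Fintype.sum_prod_type]; simp only [card_filter]
    _ = ∑ x, if quadForm σ a x = c then Zb else Bb := sum_congr rfl fun x _ => hfib x
    _ = n * Zb + (k ^ 2 - n) * Bb := by
      rw [sum_ite, sum_const, sum_const, smul_eq_mul, smul_eq_mul, ← hcompl,
        Nat.add_sub_cancel_left]
  rw [hcount]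
  exact mul_add_sub_mul_mem (hk ▸ two_le_card_fixedPts) hn hZBb

theorem ncard_points_eq (hσ : Function.Involutive σ) (a b d e f : F) :
    {t : F × F × F | σ t.2.2 + t.2.2 = σ t.1 * t.1 + σ t.2.1 * t.2.1 ∧
        t.2.2 = a * t.1 ^ 2 + b * t.2.1 ^ 2 + d * t.1 + e * t.2.1 + f}.ncard =
      #{p : F × F | quadForm σ a p.1 + quadForm σ b p.2 =
        σ f + f + quadForm σ a (σ d) + quadForm σ b (σ e)} := by
  rw [Set.ncard_eq_toFinset_card', Set.toFinset_ofPred]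
  refine card_nbij' (fun t => (t.1 + σ d, t.2.1 + σ e))
    (fun p => (p.1 + σ d, p.2 + σ e,
      a * (p.1 + σ d) ^ 2 + b * (p.2 + σ e) ^ 2 + d * (p.1 + σ d) + e * (p.2 + σ e) + f))
    ?_ ?_ ?_ ?_
  · rintro ⟨x, y, z⟩ ht
    simp only [coe_filter, mem_univ, true_and, Set.mem_ofPred_eq] at ht ⊢
    obtain ⟨hN, rfl⟩ := ht
    have := trace_add_norm_eq hσ a b d e f x y
    grind
  · rintro ⟨x, y⟩ hp
    simp only [coe_filter, mem_univ, true_and, Set.mem_ofPred_eq] at hp ⊢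
    have := trace_add_norm_eq hσ a b d e f (x + σ d) (y + σ e)
    grind
  · rintro ⟨x, y, z⟩ ht
    simp only [coe_filter, mem_univ, true_and, Set.mem_ofPred_eq] at ht
    obtain ⟨-, rfl⟩ := ht
    simp only [Prod.mk.injEq]
    grind
  · rintro ⟨x, y⟩ -
    simp only [Prod.mk.injEq]
    grind

end Counting

section Frobenius

variable [Fintype F] {h q : ℕ}

lemma charP_two_of_card_eq (hq : q = 2 ^ h) (hF : Fintype.card F = q ^ 2) : CharP F 2 := by
  have h0 := FiniteField.cast_card_eq_zero F
  rw [hF, hq] at h0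
  push_cast at h0
  exact CharTwo.of_one_ne_zero_of_two_eq_zero one_ne_zero
    (eq_zero_of_pow_eq_zero (eq_zero_of_pow_eq_zero h0))

variable [CharP F 2]

lemma iterateFrobenius_involutive (hq : q = 2 ^ h) (hF : Fintype.card F = q ^ 2) :
    Function.Involutive (iterateFrobenius F 2 h) := by
  intro x
  rw [iterateFrobenius_def, iterateFrobenius_def, ← hq, ← pow_mul, ← sq, ← hF,
    FiniteField.pow_card]

lemma card_fixedPts_iterateFrobenius [DecidableEq F] (hq : q = 2 ^ h)
    (hF : Fintype.card F = q ^ 2) : #(fixedPts (iterateFrobenius F 2 h)) = q := by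
  have hq1 : 1 < q := by
    have := hF ▸ (Fintype.one_lt_card : 1 < Fintype.card F)
    by_contra! hq1; nlinarith
  have hle : #(fixedPts (iterateFrobenius F 2 h)) ≤ q := by
    refine (Polynomial.card_le_degree_of_subset_roots fun x hx => ?_).trans
      (FiniteField.X_pow_card_sub_X_natDegree_eq F hq1).le
    rw [Polynomial.mem_roots (FiniteField.X_pow_card_sub_X_ne_zero F hq1)]
    simp_all [iterateFrobenius_def]
  obtain ⟨θ, hθ⟩ : ∃ θ, iterateFrobenius F 2 h θ ≠ θ := by
    by_contra! hfix
    have : fixedPts (iterateFrobenius F 2 h) = univ := eq_univ_of_forall fun x => by simp [hfix]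
    rw [this, card_univ, hF] at hle
    nlinarith
  have hge := card_le_card_fixedPts_sq (iterateFrobenius_involutive hq hF) hθ
  rw [hF] at hge
  exact le_antisymm hle ((Nat.pow_le_pow_iff_left two_ne_zero).mp hge)

end Frobenius

end HermitianSurface

theorem stmt_6_general
    (h q : ℕ) (hq : q = 2 ^ h)
    (F : Type) [Field F] [Fintype F] (hF : Fintype.card F = q ^ 2)
    (a b c d e f : F) (hc : c = 0) :
    Set.ncard {t : F × F × F |
        t.2.2 ^ q + t.2.2 = t.1 ^ (q + 1) + t.2.1 ^ (q + 1) ∧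
        t.2.2 = a * t.1 ^ 2 + b * t.2.1 ^ 2 + c * t.1 * t.2.1
            + d * t.1 + e * t.2.1 + f} ∈
      ({q ^ 3 - q ^ 2 + q, q ^ 3 - q, q ^ 3 + q, q ^ 3 + q ^ 2 - q} : Set ℕ) := by
  classical
  have := HermitianSurface.charP_two_of_card_eq hq hF
  set σ := iterateFrobenius F 2 h
  have hσq : ∀ x : F, x ^ q = σ x := fun x => by rw [iterateFrobenius_def, hq]
  have hσ : Function.Involutive σ := HermitianSurface.iterateFrobenius_involutive hq hF
  simp only [hc, zero_mul, add_zero, pow_succ _ q, hσq]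
  rw [HermitianSurface.ncard_points_eq hσ]
  refine HermitianSurface.card_quadForm_add_eq_mem hσ
    (HermitianSurface.card_fixedPts_iterateFrobenius hq hF) hF ?_ a b
  simp only [map_add, hσ f, HermitianSurface.apply_quadForm hσ]
  ring

/-- Lemma 3.2 of the paper (cone case): the number of affine points of
`ℋ ∩ 𝒬` when `c = 0` and `(a,b) ≠ (0,0)`. -/
theorem stmt_6
    (h q : ℕ) (hh : 1 ≤ h) (hq : q = 2 ^ h)
    (F : Type) [Field F] [Fintype F] (hF : Fintype.card F = q ^ 2)
    (a b c d e f : F) (hc : c = 0) (hab : ¬(a = 0 ∧ b = 0)) :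
    Set.ncard {t : F × F × F |
        t.2.2 ^ q + t.2.2 = t.1 ^ (q + 1) + t.2.1 ^ (q + 1) ∧
        t.2.2 = a * t.1 ^ 2 + b * t.2.1 ^ 2 + c * t.1 * t.2.1
            + d * t.1 + e * t.2.1 + f} ∈
      ({q ^ 3 - q ^ 2 + q, q ^ 3 - q, q ^ 3 + q, q ^ 3 + q ^ 2 - q} : Set ℕ) :=
  stmt_6_general h q hq F hF a b c d e f hc
end

section
/- Let q = 2^h (h ≥ 1) and F = GF(q²). Let a,b,c,d,e,f ∈ F with c ≠ 0, and let 𝒬 ⊆ ℙ³(F) be the quadric defined below. Then 𝒬 contains a projective line (that is, there exists a 2-dimensional F-linear subspace W of F⁴ all of whose nonzero vectors v satisfy aX(v)² + bY(v)² + cX(v)Y(v) + dX(v)J(v) + eY(v)J(v) + fJ(v)² + J(v)Z(v) = 0) if and only if Tr(ab/c²) = 0. -/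
/-!
The point `P = (0 : 0 : 0 : 1)` lies on `𝒬`, and its tangent plane `J = 0` meets `𝒬` in the
points `(0 : x : y : z)` with `ax² + by² + cxy = 0`. A line of `𝒬` meets this plane in a point
other than `P` (a line of `𝒬` through `P` lies in the tangent plane), and conversely a zero
`(x, y) ≠ 0` of the binary form spans a line of `𝒬` together with `P`. For `c ≠ 0` in
characteristic 2 the binary form is isotropic iff `t² + t = ab/c²` is solvable (take
`t = ax/(cy)`), and the image of the `GF(2)`-linear map `t ↦ t² + t`, whose kernel is `{0, 1}`,
is the kernel of the surjective trace by a dimension count.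
-/

open Module Submodule LinearMap FiniteField

section ArtinSchreier

variable (F : Type*) [Field F] [Finite F] [Algebra (ZMod 2) F]

noncomputable def artinSchreier : F →ₗ[ZMod 2] F :=
  (frobeniusAlgEquivOfAlgebraic (ZMod 2) F).toLinearMap + LinearMap.id

variable {F}

@[simp]
theorem artinSchreier_apply (s : F) : artinSchreier F s = s ^ 2 + s := rfl

theorem ker_artinSchreier_le : ker (artinSchreier F) ≤ ZMod 2 ∙ (1 : F) := by
  intro s hs
  have hs : s * (s + 1) = 0 := by
    rw [mem_ker, artinSchreier_apply] at hs
    linear_combination hs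
  rcases mul_eq_zero.mp hs with rfl | hs
  · exact zero_mem _
  · rw [eq_neg_of_add_eq_zero_left hs]
    exact neg_mem (mem_span_singleton_self 1)

theorem range_artinSchreier_le : range (artinSchreier F) ≤ ker (Algebra.trace (ZMod 2) F) := by
  rintro _ ⟨s, rfl⟩
  rw [mem_ker, artinSchreier, LinearMap.add_apply, map_add, AlgEquiv.toLinearMap_apply,
    Algebra.trace_eq_of_algEquiv, id_apply, CharTwo.add_self_eq_zero]

theorem range_artinSchreier : range (artinSchreier F) = ker (Algebra.trace (ZMod 2) F) := by
  refine eq_of_le_of_finrank_le range_artinSchreier_le ?_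
  have htrace := finrank_range_add_finrank_ker (Algebra.trace (ZMod 2) F)
  have hAS := finrank_range_add_finrank_ker (artinSchreier F)
  have hker : finrank (ZMod 2) (ker (artinSchreier F)) ≤ 1 :=
    (Submodule.finrank_mono ker_artinSchreier_le).trans (finrank_span_singleton one_ne_zero).le
  rw [range_eq_top.mpr (Algebra.trace_surjective (ZMod 2) F), finrank_top,
    finrank_self] at htrace
  omega

theorem trace_eq_zero_iff_exists_sq_add_self (u : F) :
    Algebra.trace (ZMod 2) F u = 0 ↔ ∃ s, s ^ 2 + s = u := by
  rw [← mem_ker, ← range_artinSchreier]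
  rfl

theorem algebraMap_trace_eq_sum_pow_two {n : ℕ} (hcard : Nat.card F = 2 ^ n) (x : F) :
    algebraMap (ZMod 2) F (Algebra.trace (ZMod 2) F x) = ∑ i ∈ Finset.range n, x ^ 2 ^ i := by
  have hn : finrank (ZMod 2) F = n := by
    have := Fintype.ofFinite F
    rw [Nat.card_eq_fintype_card, card_eq_pow_finrank (K := ZMod 2), ZMod.card] at hcard
    exact Nat.pow_right_injective le_rfl hcard
  rw [algebraMap_trace_eq_sum_pow, hn, Nat.card_zmod]

end ArtinSchreier

theorem exists_binary_zero_iff_exists_sq_add_self {F : Type*} [Field F] [CharP F 2]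
    (a b c : F) (hc : c ≠ 0) :
    (∃ x y : F, (x ≠ 0 ∨ y ≠ 0) ∧ a * x ^ 2 + b * y ^ 2 + c * x * y = 0) ↔
      ∃ s : F, s ^ 2 + s = a * b / c ^ 2 := by
  have h2 : (2 : F) = 0 := CharTwo.two_eq_zero
  by_cases ha : a = 0
  · exact ⟨fun _ => ⟨0, by simp [ha]⟩, fun _ => ⟨1, 0, by simp [ha]⟩⟩
  constructor
  · rintro ⟨x, y, hxy, h⟩
    have hy : y ≠ 0 := by
      rintro rfl
      simp_all
    refine ⟨a * x / (c * y), ?_⟩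
    field_simp
    linear_combination h - b * y ^ 2 * h2
  · rintro ⟨s, hs⟩
    refine ⟨c * s / a, 1, Or.inr one_ne_zero, ?_⟩
    field_simp at hs ⊢
    linear_combination hs + a * b * h2

theorem exists_mem_ker_notMem_span_singleton {K V : Type*} [Field K] [AddCommGroup V]
    [Module K V] {W : Submodule K V} (hW : finrank K W = 2) (ℓ : V →ₗ[K] K) (x : V)
    (hx : x ∈ W → W ≤ ker ℓ) : ∃ v ∈ W, ℓ v = 0 ∧ v ∉ K ∙ x := by
  have : FiniteDimensional K W := .of_finrank_pos (by omega)
  by_cases hxW : x ∈ W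
  · have hWx : ¬W ≤ K ∙ x := fun h => by
      have := (Submodule.finrank_mono h).trans (finrank_span_le_card ({x} : Set V))
      simp_all
    obtain ⟨v, hvW, hvx⟩ := SetLike.not_le_iff_exists.mp hWx
    exact ⟨v, hvW, hx hxW hvW, hvx⟩
  · have hrank := finrank_range_add_finrank_ker (ℓ.domRestrict W)
    have hker : ker (ℓ.domRestrict W) ≠ ⊥ := fun h => by
      have := Submodule.finrank_le (range (ℓ.domRestrict W))
      rw [h, finrank_bot] at hrank
      rw [finrank_self] at this
      omega
    obtain ⟨⟨v, hvW⟩, hv, hv0⟩ := (Submodule.ne_bot_iff _).mp hker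
    refine ⟨v, hvW, hv, fun hvx => hxW ?_⟩
    obtain ⟨t, rfl⟩ := mem_span_singleton.mp hvx
    have ht : t ≠ 0 := by rintro rfl; simp_all
    simpa [ht] using W.smul_mem t⁻¹ hvW

section Quadric

variable {F : Type*} [Field F] (a b c d e f : F)

def quadric (v : Fin 4 → F) : F :=
  a * (v 1) ^ 2 + b * (v 2) ^ 2 + c * v 1 * v 2 + d * v 1 * v 0
    + e * v 2 * v 0 + f * (v 0) ^ 2 + v 0 * v 3

theorem quadric_add_single_three (v : Fin 4 → F) (t : F) :
    quadric a b c d e f (v + Pi.single 3 t) = quadric a b c d e f v + v 0 * t := by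
  simp only [quadric, Pi.add_apply, Pi.single_eq_of_ne, Pi.single_eq_same, Fin.reduceEq,
    ne_eq, not_false_eq_true, add_zero]
  ring

theorem quadric_of_apply_zero_eq_zero {v : Fin 4 → F} (hv : v 0 = 0) :
    quadric a b c d e f v = a * (v 1) ^ 2 + b * (v 2) ^ 2 + c * v 1 * v 2 := by
  simp [quadric, hv]

theorem exists_binary_zero_of_finrank_eq_two {W : Submodule F (Fin 4 → F)}
    (hW : finrank F W = 2) (hQ : ∀ v ∈ W, v ≠ 0 → quadric a b c d e f v = 0) :
    ∃ x y : F, (x ≠ 0 ∨ y ≠ 0) ∧ a * x ^ 2 + b * y ^ 2 + c * x * y = 0 := by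
  have hQW : ∀ v ∈ W, quadric a b c d e f v = 0 := fun v hv => by
    by_cases hv0 : v = 0
    · simp [hv0, quadric]
    · exact hQ v hv hv0
  -- `J = 0` is the tangent plane at the point `(0 : 0 : 0 : 1)` of the quadric, so it contains
  -- every line of the quadric through that point.
  obtain ⟨v, hvW, hv0, hv⟩ := exists_mem_ker_notMem_span_singleton hW (proj 0)
    (Pi.single 3 1) fun he w hw => by
      simpa [quadric_add_single_three, hQW w hw] using hQW _ (W.add_mem hw he)
  refine ⟨v 1, v 2, ?_, ?_⟩
  · contrapose! hv
    exact mem_span_singleton.mpr ⟨v 3, by ext i; fin_cases i <;> simp_all⟩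
  · rw [← quadric_of_apply_zero_eq_zero a b c d e f hv0]
    exact hQW v hvW

theorem exists_finrank_eq_two_of_binary_zero {x y : F} (hxy : x ≠ 0 ∨ y ≠ 0)
    (h : a * x ^ 2 + b * y ^ 2 + c * x * y = 0) :
    ∃ W : Submodule F (Fin 4 → F), finrank F W = 2 ∧
      ∀ v ∈ W, v ≠ 0 → quadric a b c d e f v = 0 := by
  have hli : LinearIndependent F ![![0, x, y, 0], ![0, 0, 0, 1]] := by
    refine LinearIndependent.pair_iff.mpr fun s t hst => ?_
    refine ⟨?_, by simpa using congrFun hst 3⟩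
    rcases hxy with hx | hy
    · simpa [hx] using congrFun hst 1
    · simpa [hy] using congrFun hst 2
  refine ⟨span F (Set.range ![![0, x, y, 0], ![0, 0, 0, 1]]), ?_, fun v hv _ => ?_⟩
  · simp [finrank_span_eq_card hli]
  · rw [Matrix.range_cons_cons_empty, mem_span_pair] at hv
    obtain ⟨s, t, rfl⟩ := hv
    rw [quadric_of_apply_zero_eq_zero _ _ _ _ _ _ (by simp)]
    simp
    linear_combination s ^ 2 * h

theorem exists_finrank_eq_two_iff_exists_binary_zero :
    (∃ W : Submodule F (Fin 4 → F), finrank F W = 2 ∧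
      ∀ v ∈ W, v ≠ 0 → quadric a b c d e f v = 0) ↔
    ∃ x y : F, (x ≠ 0 ∨ y ≠ 0) ∧ a * x ^ 2 + b * y ^ 2 + c * x * y = 0 :=
  ⟨fun ⟨_, hW, hQ⟩ => exists_binary_zero_of_finrank_eq_two a b c d e f hW hQ,
    fun ⟨_, _, hxy, h⟩ => exists_finrank_eq_two_of_binary_zero a b c d e f hxy h⟩

end Quadric

theorem stmt_9_general
    (h q : ℕ) (hq : q = 2 ^ h)
    (F : Type) [Field F] [Fintype F] (hF : Fintype.card F = q ^ 2)
    (a b c d e f : F) (hc : c ≠ 0) :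
    (∃ W : Submodule F (Fin 4 → F), Module.finrank F W = 2 ∧
        ∀ v ∈ W, v ≠ 0 →
          a * (v 1) ^ 2 + b * (v 2) ^ 2 + c * v 1 * v 2 + d * v 1 * v 0
            + e * v 2 * v 0 + f * (v 0) ^ 2 + v 0 * v 3 = 0) ↔
      ∑ i ∈ Finset.range (2 * h), (a * b / c ^ 2) ^ 2 ^ i = 0 := by
  have hcard : Nat.card F = 2 ^ (2 * h) := by
    rw [Nat.card_eq_fintype_card, hF, hq, ← pow_mul, mul_comm]
  have : CharP F 2 := by
    have hpow := cast_card_eq_zero F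
    rw [← Nat.card_eq_fintype_card, hcard, Nat.cast_pow, Nat.cast_ofNat] at hpow
    exact CharTwo.of_one_ne_zero_of_two_eq_zero one_ne_zero (pow_eq_zero_iff'.mp hpow).1
  let _ : Algebra (ZMod 2) F := ZMod.algebra F 2
  rw [← algebraMap_trace_eq_sum_pow_two hcard, map_eq_zero_iff _ (algebraMap (ZMod 2) F).injective,
    trace_eq_zero_iff_exists_sq_add_self, ← exists_binary_zero_iff_exists_sq_add_self a b c hc]
  exact exists_finrank_eq_two_iff_exists_binary_zero a b c d e f

/-- The nondegenerate quadric `𝒬 : aX² + bY² + cXY + dXJ + eYJ + fJ² + JZ = 0`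
of `ℙ³(GF(q²))` (with `c ≠ 0`) contains a projective line if and only if it is
hyperbolic, i.e. iff `Tr(ab/c²) = 0`. Coordinates: `v 0 = J`, `v 1 = X`,
`v 2 = Y`, `v 3 = Z`. -/
theorem stmt_9
    (h q : ℕ) (hh : 1 ≤ h) (hq : q = 2 ^ h)
    (F : Type) [Field F] [Fintype F] (hF : Fintype.card F = q ^ 2)
    (a b c d e f : F) (hc : c ≠ 0) :
    (∃ W : Submodule F (Fin 4 → F), Module.finrank F W = 2 ∧
        ∀ v ∈ W, v ≠ 0 →
          a * (v 1) ^ 2 + b * (v 2) ^ 2 + c * v 1 * v 2 + d * v 1 * v 0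
            + e * v 2 * v 0 + f * (v 0) ^ 2 + v 0 * v 3 = 0) ↔
      ∑ i ∈ Finset.range (2 * h), (a * b / c ^ 2) ^ 2 ^ i = 0 :=
  stmt_9_general h q hq F hF a b c d e f hc
end

section
/- Let q = 2^h (h ≥ 1), K = GF(q) ⊆ F = GF(q²), and a,b,c ∈ F with b = 0 and c ≠ 0. If the quadratic form f in the four variables x₀,x₁,y₀,y₁ over K (defined below from a,b,c) can be written as a product of two linear forms with coefficients in an algebraic closure of K, then a = 0 and the zero set {v ∈ K⁴ : f(v) = 0} is a 2-dimensional K-linear subspace of K⁴ (equivalently, it has exactly q² elements); in other words, the projective quadric Ξ∞ defined by f in ℙ³(K) is a line. -/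
/-!
In characteristic 2 the polar form of `f` is alternating, with Pfaffian `1 + N(c)`, where
`N(s + εt) = s² + st + νt²` is the norm of `F/K`. If `f = L L'`, its polar form
`L ⊗ L' + L' ⊗ L` has rank at most 2, so the Pfaffian vanishes and `N(c) = 1`; moreover `f`
vanishes on the radical of its polar form, which is spanned by two explicit vectors, and this
forces `a = 0`. Then `f = N ∘ T` for a surjective linear map `T : K⁴ → K²`. As `Tr ν = 1`,
`t² + t + ν` has no root in `K`, so `N` is anisotropic and the zero set of `f` is the plane
`ker T`.
-/

open QuadraticMap

section CommRing

variable {R M : Type*} [CommRing R] [AddCommGroup M] [Module R M]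

theorem polar_linMulLin (L L' : Module.Dual R M) (x y : M) :
    polar (linMulLin L L') x y = L x * L' y + L y * L' x := by
  simp only [polar, linMulLin_apply, map_add]
  ring

/-- The form `f` for `b = 0` over any commutative ring: `A₀ A₁ C₀ C₁ V` play the roles of
`a₀ a₁ c₀ c₁ ν`, and `x = (x₀, x₁, y₀, y₁)`. -/
def xiForm (A₀ A₁ C₀ C₁ V : R) (x : Fin 4 → R) : R :=
  (A₁ + 1) * x 0 ^ 2 + x 0 * x 1 + (A₀ + (1 + V) * A₁ + V) * x 1 ^ 2
    + x 2 ^ 2 + x 2 * x 3 + V * x 3 ^ 2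
    + C₁ * x 0 * x 2 + (C₀ + C₁) * x 0 * x 3 + (C₀ + C₁) * x 1 * x 2
    + (C₀ + (1 + V) * C₁) * x 1 * x 3

/-- The norm form of `F/K` in the basis `1, ε`: `N(s + εt) = s² + st + νt²`. -/
def normForm (V : R) (p : R × R) : R :=
  p.1 ^ 2 + p.1 * p.2 + V * p.2 ^ 2

def xiLinearMap (C₀ C₁ V : R) : (Fin 4 → R) →ₗ[R] R × R :=
  (Fintype.linearCombination R ![1, 1, C₀, V * C₁]).prod
    (Fintype.linearCombination R ![0, 1, C₁, C₀ + C₁])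

end CommRing

section CharTwo

variable {R M : Type*} [CommRing R] [CharP R 2] [AddCommGroup M] [Module R M]

theorem sum_range_sq_add_self_pow_two_pow (k : R) (n : ℕ) :
    ∑ i ∈ Finset.range n, (k ^ 2 + k) ^ 2 ^ i = k ^ 2 ^ n + k := by
  have htelescope (i : ℕ) : (k ^ 2 + k) ^ 2 ^ i = k ^ 2 ^ (i + 1) - k ^ 2 ^ i := by
    rw [add_pow_char_pow, ← pow_mul, ← pow_succ', CharTwo.sub_eq_add]
  rw [Finset.sum_congr rfl fun i _ ↦ htelescope i, Finset.sum_range_sub (fun i ↦ k ^ 2 ^ i),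
    pow_zero, pow_one, CharTwo.sub_eq_add]

theorem pfaffian_polar_linMulLin_eq_zero (L L' : Module.Dual R M) (v₀ v₁ v₂ v₃ : M) :
    polar (linMulLin L L') v₀ v₁ * polar (linMulLin L L') v₂ v₃
      + polar (linMulLin L L') v₀ v₂ * polar (linMulLin L L') v₁ v₃
      + polar (linMulLin L L') v₀ v₃ * polar (linMulLin L L') v₁ v₂ = 0 := by
  simp only [polar_linMulLin]
  grind

theorem linMulLin_mul_polar_eq_zero (L L' : Module.Dual R M) {u : M}
    (hu : ∀ y, polar (linMulLin L L') u y = 0) (v w : M) :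
    linMulLin L L' u * polar (linMulLin L L') v w = 0 := by
  have hv := hu v
  have hw := hu w
  simp only [polar_linMulLin, linMulLin_apply] at hv hw ⊢
  grind

theorem eq_zero_of_mul_sq_add_mul_sq_eq_zero {α β X₁ Y₁ X₂ Y₂ : R}
    (h₁ : α * X₁ ^ 2 + β * Y₁ ^ 2 = 0) (h₂ : α * X₂ ^ 2 + β * Y₂ ^ 2 = 0)
    (hdet : X₁ * Y₂ + X₂ * Y₁ = 1) : α = 0 ∧ β = 0 := by
  constructor <;> grind

theorem polar_xiForm (A₀ A₁ C₀ C₁ V : R) (x y : Fin 4 → R) :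
    polar (xiForm A₀ A₁ C₀ C₁ V) x y
      = x 0 * y 1 + x 1 * y 0 + x 2 * y 3 + x 3 * y 2 + C₁ * (x 0 * y 2 + x 2 * y 0)
        + (C₀ + C₁) * (x 0 * y 3 + x 3 * y 0 + x 1 * y 2 + x 2 * y 1)
        + (C₀ + (1 + V) * C₁) * (x 1 * y 3 + x 3 * y 1) := by
  simp only [polar, xiForm, Pi.add_apply]
  grind

theorem xiForm_coeffs_of_eq_linMulLin {A₀ A₁ C₀ C₁ V : R} (L L' : Module.Dual R (Fin 4 → R))
    (h : xiForm A₀ A₁ C₀ C₁ V = linMulLin L L') :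
    C₀ ^ 2 + C₀ * C₁ + V * C₁ ^ 2 = 1 ∧ A₀ = 0 ∧ A₁ = 0 := by
  have hpolar : polar (linMulLin L L') = polar (xiForm A₀ A₁ C₀ C₁ V) := by rw [h]
  have hN : C₀ ^ 2 + C₀ * C₁ + V * C₁ ^ 2 = 1 := by
    have := pfaffian_polar_linMulLin_eq_zero L L' ![1, 0, 0, 0] ![0, 1, 0, 0] ![0, 0, 1, 0]
      ![0, 0, 0, 1]
    simp only [hpolar, polar_xiForm, Matrix.cons_val_zero, Matrix.cons_val_one,
      Matrix.cons_val] at this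
    grind
  have radical (u : Fin 4 → R) (hu : ∀ y, polar (xiForm A₀ A₁ C₀ C₁ V) u y = 0) :
      xiForm A₀ A₁ C₀ C₁ V u = 0 := by
    have := linMulLin_mul_polar_eq_zero L L' (hpolar ▸ hu) ![1, 0, 0, 0] ![0, 1, 0, 0]
    rw [hpolar, polar_xiForm, ← h] at this
    simpa using this
  -- these two vectors span the radical of the polar form once `N(C) = 1`
  have hu := radical ![C₀ + C₁, C₁, 1, 0] fun y ↦ by
    simp only [polar_xiForm, Matrix.cons_val_zero, Matrix.cons_val_one, Matrix.cons_val]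
    grind
  have hw := radical ![C₀ + C₁ + V * C₁, C₀ + C₁, 0, 1] fun y ↦ by
    simp only [polar_xiForm, Matrix.cons_val_zero, Matrix.cons_val_one, Matrix.cons_val]
    grind
  simp only [xiForm, Matrix.cons_val_zero, Matrix.cons_val_one, Matrix.cons_val] at hu hw
  obtain ⟨h₁, h₀⟩ := eq_zero_of_mul_sq_add_mul_sq_eq_zero (α := A₁) (β := A₀ + (1 + V) * A₁)
    (X₁ := C₀ + C₁) (Y₁ := C₁) (X₂ := C₀ + C₁ + V * C₁) (Y₂ := C₀ + C₁)
    (by grind) (by grind) (by grind)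
  exact ⟨hN, by grind, h₁⟩

theorem xiForm_zero_zero_eq_normForm {C₀ C₁ V : R} (hN : C₀ ^ 2 + C₀ * C₁ + V * C₁ ^ 2 = 1)
    (x : Fin 4 → R) : xiForm 0 0 C₀ C₁ V x = normForm V (xiLinearMap C₀ C₁ V x) := by
  simp only [xiForm, normForm, xiLinearMap, LinearMap.prod_apply, Function.prod,
    Fintype.linearCombination_apply, Fin.sum_univ_four, smul_eq_mul, Matrix.cons_val_zero,
    Matrix.cons_val_one, Matrix.cons_val]
  grind

end CharTwo

section Field

variable {K : Type*} [Field K]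

theorem sq_add_self_add_ne_zero_of_sum_pow_eq_one [Fintype K] [CharP K 2] {h : ℕ}
    (hK : Fintype.card K = 2 ^ h) {ν : K} (hν : ∑ i ∈ Finset.range h, ν ^ 2 ^ i = 1) (k : K) :
    k ^ 2 + k + ν ≠ 0 := by
  intro hk
  have : ν = k ^ 2 + k := by grind
  rw [this, sum_range_sq_add_self_pow_two_pow, ← hK, FiniteField.pow_card,
    CharTwo.add_self_eq_zero] at hν
  exact zero_ne_one hν

theorem eq_zero_of_normForm_eq_zero {ν : K} (hν : ∀ k : K, k ^ 2 + k + ν ≠ 0) {p : K × K}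
    (h : normForm ν p = 0) : p = 0 := by
  obtain ⟨s, t⟩ := p
  simp only [normForm] at h
  rcases eq_or_ne t 0 with rfl | ht
  · simpa using h
  · refine absurd ?_ (hν (s / t))
    field_simp
    linear_combination h

theorem notMem_range_algebraMap_of_sq_add_self_add_eq_zero {F : Type*} [Field F] [Algebra K F]
    {ν : K} (hν : ∀ k : K, k ^ 2 + k + ν ≠ 0) {ε : F} (hε : ε ^ 2 + ε + algebraMap K F ν = 0) :
    ε ∉ Set.range (algebraMap K F) := by
  rintro ⟨k, rfl⟩
  exact hν k <| (algebraMap K F).injective (by simpa using hε)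

theorem eq_zero_of_algebraMap_add_mul_algebraMap_eq_zero {F : Type*} [Field F] [Algebra K F]
    {ε : F} (hε : ε ∉ Set.range (algebraMap K F)) {x y : K}
    (h : algebraMap K F x + ε * algebraMap K F y = 0) : x = 0 ∧ y = 0 := by
  obtain rfl : y = 0 := by
    by_contra hy
    refine hε ⟨-x / y, ?_⟩
    rw [map_div₀, map_neg, div_eq_iff (by simpa)]
    linear_combination -h
  simpa using h

theorem surjective_xiLinearMap (c₀ c₁ ν : K) : Function.Surjective (xiLinearMap c₀ c₁ ν) := by
  intro p
  refine ⟨![p.1 - p.2, p.2, 0, 0], ?_⟩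
  simp [xiLinearMap, Fintype.linearCombination_apply, Fin.sum_univ_four]

theorem finrank_ker_xiLinearMap (c₀ c₁ ν : K) :
    Module.finrank K (LinearMap.ker (xiLinearMap c₀ c₁ ν)) = 2 := by
  have := LinearMap.finrank_range_add_finrank_ker (xiLinearMap c₀ c₁ ν)
  rw [LinearMap.range_eq_top.mpr (surjective_xiLinearMap c₀ c₁ ν), finrank_top,
    Module.finrank_prod, Module.finrank_self, Module.finrank_fin_fun] at this
  omega

theorem xiForm_eq_zero_iff [CharP K 2] {c₀ c₁ ν : K} (hν : ∀ k : K, k ^ 2 + k + ν ≠ 0)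
    (hN : c₀ ^ 2 + c₀ * c₁ + ν * c₁ ^ 2 = 1) (x : Fin 4 → K) :
    xiForm 0 0 c₀ c₁ ν x = 0 ↔ x ∈ LinearMap.ker (xiLinearMap c₀ c₁ ν) := by
  rw [xiForm_zero_zero_eq_normForm hN, LinearMap.mem_ker]
  exact ⟨eq_zero_of_normForm_eq_zero hν, fun h ↦ by simp [h, normForm]⟩

end Field

theorem stmt_11_general
    (h q : ℕ) (hq : q = 2 ^ h)
    (K F : Type) [Field K] [Fintype K] [Field F] [Algebra K F]
    (hK : Fintype.card K = q)
    (ν : K) (hν : ∑ i ∈ Finset.range h, ν ^ 2 ^ i = 1)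
    (ε : F) (hε : ε ^ 2 + ε + algebraMap K F ν = 0)
    (a₀ a₁ b₀ b₁ c₀ c₁ : K)
    (hb : algebraMap K F b₀ + ε * algebraMap K F b₁ = 0)
    (hfac : ∃ l m n r l' m' n' r' : AlgebraicClosure K,
      ∀ x₀ x₁ y₀ y₁ : AlgebraicClosure K,
        algebraMap K (AlgebraicClosure K) (a₁ + 1) * x₀ ^ 2 + x₀ * x₁
          + algebraMap K (AlgebraicClosure K) (a₀ + (1 + ν) * a₁ + ν) * x₁ ^ 2
          + algebraMap K (AlgebraicClosure K) (b₁ + 1) * y₀ ^ 2 + y₀ * y₁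
          + algebraMap K (AlgebraicClosure K) (b₀ + (1 + ν) * b₁ + ν) * y₁ ^ 2
          + algebraMap K (AlgebraicClosure K) c₁ * x₀ * y₀
          + algebraMap K (AlgebraicClosure K) (c₀ + c₁) * x₀ * y₁
          + algebraMap K (AlgebraicClosure K) (c₀ + c₁) * x₁ * y₀
          + algebraMap K (AlgebraicClosure K) (c₀ + (1 + ν) * c₁) * x₁ * y₁
        = (l * x₀ + m * x₁ + n * y₀ + r * y₁)
            * (l' * x₀ + m' * x₁ + n' * y₀ + r' * y₁)) :
    (algebraMap K F a₀ + ε * algebraMap K F a₁ = 0) ∧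
    ∃ W : Submodule K (Fin 4 → K), Module.finrank K W = 2 ∧
      {v : Fin 4 → K |
        (a₁ + 1) * (v 0) ^ 2 + v 0 * v 1
          + (a₀ + (1 + ν) * a₁ + ν) * (v 1) ^ 2
          + (b₁ + 1) * (v 2) ^ 2 + v 2 * v 3
          + (b₀ + (1 + ν) * b₁ + ν) * (v 3) ^ 2
          + c₁ * v 0 * v 2 + (c₀ + c₁) * v 0 * v 3
          + (c₀ + c₁) * v 1 * v 2 + (c₀ + (1 + ν) * c₁) * v 1 * v 3 = 0}
        = (W : Set (Fin 4 → K)) := by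
  subst hq
  have : CharP K 2 := charP_of_card_eq_prime_pow hK
  have hroot := sq_add_self_add_ne_zero_of_sum_pow_eq_one hK hν
  obtain ⟨rfl, rfl⟩ := eq_zero_of_algebraMap_add_mul_algebraMap_eq_zero
    (notMem_range_algebraMap_of_sq_add_self_add_eq_zero hroot hε) hb
  obtain ⟨hN, rfl, rfl⟩ : c₀ ^ 2 + c₀ * c₁ + ν * c₁ ^ 2 = 1 ∧ a₀ = 0 ∧ a₁ = 0 := by
    obtain ⟨l, m, n, r, l', m', n', r', H⟩ := hfac
    set ι := algebraMap K (AlgebraicClosure K)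
    have hprod : xiForm (ι a₀) (ι a₁) (ι c₀) (ι c₁) (ι ν)
        = linMulLin (Fintype.linearCombination _ ![l, m, n, r])
            (Fintype.linearCombination _ ![l', m', n', r']) := by
      funext x
      have := H (x 0) (x 1) (x 2) (x 3)
      simp only [xiForm, linMulLin_apply, Fintype.linearCombination_apply, Fin.sum_univ_four,
        smul_eq_mul, Matrix.cons_val_zero, Matrix.cons_val_one, Matrix.cons_val, map_add,
        map_mul, map_one, map_zero] at this ⊢
      linear_combination this
    obtain ⟨hN, h₀, h₁⟩ := xiForm_coeffs_of_eq_linMulLin _ _ hprod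
    refine ⟨ι.injective ?_, by simpa using h₀, by simpa using h₁⟩
    simpa using hN
  refine ⟨by simp, LinearMap.ker (xiLinearMap c₀ c₁ ν), finrank_ker_xiLinearMap c₀ c₁ ν, ?_⟩
  ext v
  simpa [xiForm] using xiForm_eq_zero_iff hroot hN v

/-- Lemma 3.4 of the paper: with `b = 0` and `c ≠ 0` (the normal form for a
hyperbolic quadric meeting `ℋ` at infinity only in `P∞`), if the quadratic
form `f` over `K = GF(q)` describing `Ξ∞` splits into two linear factors over
an algebraic closure of `K` (`rank Ξ∞ = 2`), then `a = 0` and the affine zero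
set of `f` in `K⁴` is a 2-dimensional `K`-subspace, i.e. `Ξ∞` is a line.
Coordinates: `v 0 = x₀`, `v 1 = x₁`, `v 2 = y₀`, `v 3 = y₁`. -/
theorem stmt_11
    (h q : ℕ) (hh : 1 ≤ h) (hq : q = 2 ^ h)
    (K F : Type) [Field K] [Fintype K] [Field F] [Fintype F] [Algebra K F]
    (hK : Fintype.card K = q) (hF : Fintype.card F = q ^ 2)
    (ν : K) (hν : ∑ i ∈ Finset.range h, ν ^ 2 ^ i = 1)
    (ε : F) (hε : ε ^ 2 + ε + algebraMap K F ν = 0)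
    (a₀ a₁ b₀ b₁ c₀ c₁ : K)
    (hb : algebraMap K F b₀ + ε * algebraMap K F b₁ = 0)
    (hc : algebraMap K F c₀ + ε * algebraMap K F c₁ ≠ 0)
    (hfac : ∃ l m n r l' m' n' r' : AlgebraicClosure K,
      ∀ x₀ x₁ y₀ y₁ : AlgebraicClosure K,
        algebraMap K (AlgebraicClosure K) (a₁ + 1) * x₀ ^ 2 + x₀ * x₁
          + algebraMap K (AlgebraicClosure K) (a₀ + (1 + ν) * a₁ + ν) * x₁ ^ 2
          + algebraMap K (AlgebraicClosure K) (b₁ + 1) * y₀ ^ 2 + y₀ * y₁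
          + algebraMap K (AlgebraicClosure K) (b₀ + (1 + ν) * b₁ + ν) * y₁ ^ 2
          + algebraMap K (AlgebraicClosure K) c₁ * x₀ * y₀
          + algebraMap K (AlgebraicClosure K) (c₀ + c₁) * x₀ * y₁
          + algebraMap K (AlgebraicClosure K) (c₀ + c₁) * x₁ * y₀
          + algebraMap K (AlgebraicClosure K) (c₀ + (1 + ν) * c₁) * x₁ * y₁
        = (l * x₀ + m * x₁ + n * y₀ + r * y₁)
            * (l' * x₀ + m' * x₁ + n' * y₀ + r' * y₁)) :
    (algebraMap K F a₀ + ε * algebraMap K F a₁ = 0) ∧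
    ∃ W : Submodule K (Fin 4 → K), Module.finrank K W = 2 ∧
      {v : Fin 4 → K |
        (a₁ + 1) * (v 0) ^ 2 + v 0 * v 1
          + (a₀ + (1 + ν) * a₁ + ν) * (v 1) ^ 2
          + (b₁ + 1) * (v 2) ^ 2 + v 2 * v 3
          + (b₀ + (1 + ν) * b₁ + ν) * (v 3) ^ 2
          + c₁ * v 0 * v 2 + (c₀ + c₁) * v 0 * v 3
          + (c₀ + c₁) * v 1 * v 2 + (c₀ + (1 + ν) * c₁) * v 1 * v 3 = 0}
        = (W : Set (Fin 4 → K)) :=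
  stmt_11_general h q hq K F hK ν hν ε hε a₀ a₁ b₀ b₁ c₀ c₁ hb hfac
end

section
/- Let q = 2^h (h ≥ 1), K = GF(q) ⊆ F = GF(q²), and a,b,c ∈ F. If the quadratic form f in the four variables x₀,x₁,y₀,y₁ over K (defined below from a,b,c) can be written as a product of two linear forms with coefficients in an algebraic closure of K, then c^{q+1} = 1. -/
/-!
If `f = L · L'` with `L, L'` linear, the polar form `B(u, v) = f(u + v) - f(u) - f(v)` equals
`L(u) L'(v) + L(v) L'(u)`; in characteristic 2 these values are the Plücker coordinates of
the line spanned by `L` and `L'`, so they satisfy the Plücker relation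
`B₀₁B₂₃ + B₀₂B₁₃ + B₀₃B₁₂ = 0`. For the form of `Ξ∞` this relation reads
`c₀² + c₀c₁ + νc₁² = 1`. Since `ε^q = ε + 1`, the left-hand side is the norm
`(c₀ + εc₁)(c₀ + (ε + 1)c₁) = c^{q+1}`.
-/

open Finset

theorem pluecker_relation_of_charTwo {R : Type*} [CommRing R] [CharP R 2]
    (l m n r l' m' n' r' : R) :
    (l * m' + m * l') * (n * r' + r * n') + (l * n' + n * l') * (m * r' + r * m')
      + (l * r' + r * l') * (m * n' + n * m') = 0 := by
  linear_combination (l * m' * n * r' + l * m' * r * n' + m * l' * n * r' + m * l' * r * n'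
    + l * n' * m * r' + n * l' * r * m') * CharTwo.two_eq_zero (R := R)

theorem pow_two_pow_eq_add_sum_of_sq_add_self_add_eq_zero {R : Type*} [CommRing R] [CharP R 2]
    {x a : R} (hx : x ^ 2 + x + a = 0) (k : ℕ) :
    x ^ 2 ^ k = x + ∑ i ∈ range k, a ^ 2 ^ i := by
  induction k with
  | zero => simp
  | succ k ih =>
    rw [pow_succ, pow_mul, ih, CharTwo.add_sq, CharTwo.sum_sq, sum_range_succ']
    simp only [← pow_mul, ← pow_succ, pow_zero, pow_one]
    linear_combination hx - (x + a) * CharTwo.two_eq_zero (R := R)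

theorem add_mul_pow_two_pow_add_one {R : Type*} [CommRing R] [CharP R 2] {ε a x y : R} {h : ℕ}
    (hε : ε ^ 2 + ε + a = 0) (hεh : ε ^ 2 ^ h = ε + 1) (hx : x ^ 2 ^ h = x)
    (hy : y ^ 2 ^ h = y) :
    (x + ε * y) ^ (2 ^ h + 1) = x ^ 2 + x * y + a * y ^ 2 := by
  rw [pow_succ, add_pow_char_pow, mul_pow, hx, hy, hεh]
  linear_combination y ^ 2 * hε + (ε * x * y - a * y ^ 2) * CharTwo.two_eq_zero (R := R)

def xiInftyForm {K A : Type*} [CommRing K] [CommRing A] [Algebra K A] (ν a₀ a₁ b₀ b₁ c₀ c₁ : K)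
    (x₀ x₁ y₀ y₁ : A) : A :=
  algebraMap K A (a₁ + 1) * x₀ ^ 2 + x₀ * x₁
    + algebraMap K A (a₀ + (1 + ν) * a₁ + ν) * x₁ ^ 2
    + algebraMap K A (b₁ + 1) * y₀ ^ 2 + y₀ * y₁
    + algebraMap K A (b₀ + (1 + ν) * b₁ + ν) * y₁ ^ 2
    + algebraMap K A c₁ * x₀ * y₀
    + algebraMap K A (c₀ + c₁) * x₀ * y₁
    + algebraMap K A (c₀ + c₁) * x₁ * y₀
    + algebraMap K A (c₀ + (1 + ν) * c₁) * x₁ * y₁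

theorem norm_eq_one_of_xiInftyForm_eq_mul {K A : Type*} [Field K] [Field A] [Algebra K A]
    [CharP A 2] {ν a₀ a₁ b₀ b₁ c₀ c₁ : K}
    (hsplit : ∃ l m n r l' m' n' r' : A, ∀ x₀ x₁ y₀ y₁ : A,
      xiInftyForm ν a₀ a₁ b₀ b₁ c₀ c₁ x₀ x₁ y₀ y₁
        = (l * x₀ + m * x₁ + n * y₀ + r * y₁) * (l' * x₀ + m' * x₁ + n' * y₀ + r' * y₁)) :
    c₀ ^ 2 + c₀ * c₁ + ν * c₁ ^ 2 = 1 := by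
  obtain ⟨l, m, n, r, l', m', n', r', H⟩ := hsplit
  simp only [xiInftyForm, map_add, map_mul, map_one] at H
  have B₀₁ : l * m' + m * l' = 1 := by linear_combination H 0 1 0 0 + H 1 0 0 0 - H 1 1 0 0
  have B₂₃ : n * r' + r * n' = 1 := by linear_combination H 0 0 0 1 + H 0 0 1 0 - H 0 0 1 1
  have B₀₂ : l * n' + n * l' = algebraMap K A c₁ := by
    linear_combination H 0 0 1 0 + H 1 0 0 0 - H 1 0 1 0
  have B₁₃ : m * r' + r * m'
      = algebraMap K A c₀ + (1 + algebraMap K A ν) * algebraMap K A c₁ := by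
    linear_combination H 0 0 0 1 + H 0 1 0 0 - H 0 1 0 1
  have B₀₃ : l * r' + r * l' = algebraMap K A c₀ + algebraMap K A c₁ := by
    linear_combination H 0 0 0 1 + H 1 0 0 0 - H 1 0 0 1
  have B₁₂ : m * n' + n * m' = algebraMap K A c₀ + algebraMap K A c₁ := by
    linear_combination H 0 0 1 0 + H 0 1 0 0 - H 0 1 1 0
  have pluecker := pluecker_relation_of_charTwo l m n r l' m' n' r'
  rw [B₀₁, B₂₃, B₀₂, B₁₃, B₀₃, B₁₂] at pluecker
  apply (algebraMap K A).injective
  simp only [map_add, map_mul, map_pow, map_one]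
  linear_combination pluecker - (1 + algebraMap K A c₀ * algebraMap K A c₁
    + algebraMap K A c₁ ^ 2) * CharTwo.two_eq_zero (R := A)

theorem stmt_13_general
    (h q : ℕ) (hq : q = 2 ^ h)
    (K F : Type) [Field K] [Fintype K] [Field F] [Algebra K F]
    (hK : Fintype.card K = q)
    (ν : K) (hν : ∑ i ∈ Finset.range h, ν ^ 2 ^ i = 1)
    (ε : F) (hε : ε ^ 2 + ε + algebraMap K F ν = 0)
    (a₀ a₁ b₀ b₁ c₀ c₁ : K)
    (hfac : ∃ l m n r l' m' n' r' : AlgebraicClosure K,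
      ∀ x₀ x₁ y₀ y₁ : AlgebraicClosure K,
        algebraMap K (AlgebraicClosure K) (a₁ + 1) * x₀ ^ 2 + x₀ * x₁
          + algebraMap K (AlgebraicClosure K) (a₀ + (1 + ν) * a₁ + ν) * x₁ ^ 2
          + algebraMap K (AlgebraicClosure K) (b₁ + 1) * y₀ ^ 2 + y₀ * y₁
          + algebraMap K (AlgebraicClosure K) (b₀ + (1 + ν) * b₁ + ν) * y₁ ^ 2
          + algebraMap K (AlgebraicClosure K) c₁ * x₀ * y₀
          + algebraMap K (AlgebraicClosure K) (c₀ + c₁) * x₀ * y₁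
          + algebraMap K (AlgebraicClosure K) (c₀ + c₁) * x₁ * y₀
          + algebraMap K (AlgebraicClosure K) (c₀ + (1 + ν) * c₁) * x₁ * y₁
        = (l * x₀ + m * x₁ + n * y₀ + r * y₁)
            * (l' * x₀ + m' * x₁ + n' * y₀ + r' * y₁)) :
    (algebraMap K F c₀ + ε * algebraMap K F c₁) ^ (q + 1) = 1 := by
  subst hq
  have : CharP K 2 := charP_of_card_eq_prime_pow hK
  have : CharP F 2 := charP_of_injective_algebraMap (algebraMap K F).injective 2
  have : CharP (AlgebraicClosure K) 2 :=
    charP_of_injective_algebraMap (algebraMap K (AlgebraicClosure K)).injective 2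
  have hεq : ε ^ 2 ^ h = ε + 1 := by
    rw [pow_two_pow_eq_add_sum_of_sq_add_self_add_eq_zero hε]
    simp only [← map_pow, ← map_sum, hν, map_one]
  have hfix (x : K) : algebraMap K F x ^ 2 ^ h = algebraMap K F x := by
    rw [← map_pow, ← hK, FiniteField.pow_card]
  rw [add_mul_pow_two_pow_add_one hε hεq (hfix c₀) (hfix c₁), ← map_one (algebraMap K F),
    ← norm_eq_one_of_xiInftyForm_eq_mul hfac]
  simp only [map_add, map_mul, map_pow]

/-- From the proof of Lemma 3.2 (via `det A∞ = 1 + c^{2(q+1)}`): if the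
quadratic form `f` over `K = GF(q)` describing `Ξ∞` splits into two linear
factors over an algebraic closure of `K` (so `Ξ∞` is degenerate of rank 2),
then `c^{q+1} = 1`, where `c = c₀ + εc₁ ∈ F = GF(q²)`. -/
theorem stmt_13
    (h q : ℕ) (hh : 1 ≤ h) (hq : q = 2 ^ h)
    (K F : Type) [Field K] [Fintype K] [Field F] [Fintype F] [Algebra K F]
    (hK : Fintype.card K = q) (hF : Fintype.card F = q ^ 2)
    (ν : K) (hν : ∑ i ∈ Finset.range h, ν ^ 2 ^ i = 1)
    (ε : F) (hε : ε ^ 2 + ε + algebraMap K F ν = 0)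
    (a₀ a₁ b₀ b₁ c₀ c₁ : K)
    (hfac : ∃ l m n r l' m' n' r' : AlgebraicClosure K,
      ∀ x₀ x₁ y₀ y₁ : AlgebraicClosure K,
        algebraMap K (AlgebraicClosure K) (a₁ + 1) * x₀ ^ 2 + x₀ * x₁
          + algebraMap K (AlgebraicClosure K) (a₀ + (1 + ν) * a₁ + ν) * x₁ ^ 2
          + algebraMap K (AlgebraicClosure K) (b₁ + 1) * y₀ ^ 2 + y₀ * y₁
          + algebraMap K (AlgebraicClosure K) (b₀ + (1 + ν) * b₁ + ν) * y₁ ^ 2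
          + algebraMap K (AlgebraicClosure K) c₁ * x₀ * y₀
          + algebraMap K (AlgebraicClosure K) (c₀ + c₁) * x₀ * y₁
          + algebraMap K (AlgebraicClosure K) (c₀ + c₁) * x₁ * y₀
          + algebraMap K (AlgebraicClosure K) (c₀ + (1 + ν) * c₁) * x₁ * y₁
        = (l * x₀ + m * x₁ + n * y₀ + r * y₁)
            * (l' * x₀ + m' * x₁ + n' * y₀ + r' * y₁)) :
    (algebraMap K F c₀ + ε * algebraMap K F c₁) ^ (q + 1) = 1 :=
  stmt_13_general h q hq K F hK ν hν ε hε a₀ a₁ b₀ b₁ c₀ c₁ hfac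
end
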